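/- arXiv:1809.01136 — 7 statements merged into one kernel-verified Lean document; each statement's English description precedes it below -/
import Mathlib

section
/- For a finite simple graph G, equality ζ(G) = ε(Ḡ) holds if and only if G is a complete graph (in which case both sides are 0). -/
open SimpleGraph

/-- A proper vertex colouring of `G` using exactly `χ(G)` colours. -/
def IsChromaticColoring {V : Type*} (G : SimpleGraph V) (c : V → ℕ) : Prop :=
  (∀ u v, G.Adj u v → c u ≠ c v) ∧ ((Set.range c).ncard : ℕ∞) = G.chromaticNumber

/-- The set of chromatic completion edges for a colouring `c`: unordered pairs of
distinct non-adjacent vertices with different colours. -/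
def completionEdges {V : Type*} (G : SimpleGraph V) (c : V → ℕ) : Set (Sym2 V) :=
  {e | ∃ u v, e = s(u, v) ∧ u ≠ v ∧ ¬ G.Adj u v ∧ c u ≠ c v}

/-- The chromatic completion number `ζ(G)`. -/
noncomputable def zeta {V : Type*} (G : SimpleGraph V) : ℕ :=
  sSup {m | ∃ c : V → ℕ, IsChromaticColoring G c ∧ m = (completionEdges G c).ncard}

/-! Every chromatic completion edge is an edge of `Gᶜ`; if `G` is not complete, a chromatic
colouring uses fewer than `|V|` colours, so two non-adjacent vertices share a colour and the edge
of `Gᶜ` joining them is missed. Hence `ζ(G) < ε(Ḡ)` unless `G = ⊤`, where `ε(Ḡ) = 0`. -/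

section

variable {V : Type*} {G : SimpleGraph V} {c : V → ℕ}

lemma completionEdges_subset_edgeSet_compl (G : SimpleGraph V) (c : V → ℕ) :
    completionEdges G c ⊆ Gᶜ.edgeSet := by
  rintro e ⟨u, v, rfl, huv, hnadj, -⟩
  exact ⟨huv, hnadj⟩

lemma zeta_le_ncard_edgeSet_compl [Finite V] (G : SimpleGraph V) :
    zeta G ≤ Gᶜ.edgeSet.ncard :=
  csSup_le' <| by
    rintro m ⟨c, -, rfl⟩
    exact Set.ncard_le_ncard (completionEdges_subset_edgeSet_compl G c) (Set.toFinite _)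

namespace IsChromaticColoring

lemma eq_top_of_injective [Fintype V] (hc : IsChromaticColoring G c)
    (hinj : Function.Injective c) : G = ⊤ := by
  rw [← chromaticNumber_eq_card_iff, ← hc.2, ← Set.image_univ,
    Set.ncard_image_of_injective _ hinj, Set.ncard_univ, Nat.card_eq_fintype_card]

lemma ncard_completionEdges_lt [Fintype V] (hc : IsChromaticColoring G c) (hG : G ≠ ⊤) :
    (completionEdges G c).ncard < Gᶜ.edgeSet.ncard := by
  obtain ⟨u, v, hcuv, huv⟩ := Function.not_injective_iff.mp (mt hc.eq_top_of_injective hG)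
  have hmem : s(u, v) ∈ Gᶜ.edgeSet := ⟨huv, fun hadj => hc.1 u v hadj hcuv⟩
  have hnotmem : s(u, v) ∉ completionEdges G c := by
    rintro ⟨a, b, hab, -, -, hcab⟩
    rcases Sym2.eq_iff.mp hab with ⟨rfl, rfl⟩ | ⟨rfl, rfl⟩
    exacts [hcab hcuv, hcab hcuv.symm]
  exact Set.ncard_lt_ncard
    ⟨completionEdges_subset_edgeSet_compl G c, fun hsub => hnotmem (hsub hmem)⟩ (Set.toFinite _)

end IsChromaticColoring

lemma zeta_lt_ncard_edgeSet_compl [Fintype V] (hG : G ≠ ⊤) :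
    zeta G < Gᶜ.edgeSet.ncard := by
  have hpos : 0 < Gᶜ.edgeSet.ncard :=
    (Set.ncard_pos (Set.toFinite _)).mpr (edgeSet_nonempty.mpr (compl_eq_bot.not.mpr hG))
  have hle : zeta G ≤ Gᶜ.edgeSet.ncard - 1 :=
    csSup_le' <| by
      rintro m ⟨c, hc, rfl⟩
      exact Nat.le_sub_one_of_lt (hc.ncard_completionEdges_lt hG)
  omega

end

theorem zeta_eq_card_compl_edges_iff_general {V : Type*} [Fintype V] (G : SimpleGraph V) :
    (zeta G = Gᶜ.edgeSet.ncard ↔ G = ⊤) ∧ (G = ⊤ → zeta G = 0 ∧ Gᶜ.edgeSet.ncard = 0) := by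
  have htop : G = ⊤ → zeta G = 0 ∧ Gᶜ.edgeSet.ncard = 0 := by
    rintro rfl
    have hε : (⊤ : SimpleGraph V)ᶜ.edgeSet.ncard = 0 := by simp
    exact ⟨Nat.le_zero.mp (hε ▸ zeta_le_ncard_edgeSet_compl _), hε⟩
  refine ⟨⟨fun heq => ?_, fun h => (htop h).1.trans (htop h).2.symm⟩, htop⟩
  by_contra hG
  exact (zeta_lt_ncard_edgeSet_compl hG).ne heq

/-- $ζ(G) = ε(\bar G)$ holds iff $G$ is complete (in which case both sides are $0$). -/
theorem zeta_eq_card_compl_edges_iff {V : Type*} [Fintype V] [Nonempty V] (G : SimpleGraph V) :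
    (zeta G = Gᶜ.edgeSet.ncard ↔ G = ⊤) ∧ (G = ⊤ → zeta G = 0 ∧ Gᶜ.edgeSet.ncard = 0) :=
  zeta_eq_card_compl_edges_iff_general G
end

section
/- (Lucky's Theorem) Let n ≥ 2 and 2 ≤ p ≤ n be integers, write n = p·⌊n/p⌋ + r with 0 ≤ r < p, and let t_1, …, t_p be the balanced p-partition of n consisting of (p − r) parts equal to ⌊n/p⌋ and r parts equal to ⌈n/p⌉. Then for every sequence of positive integers a_1, …, a_p with a_1 + ⋯ + a_p = n, one has Σ_{1 ≤ i < j ≤ p} a_i·a_j ≤ Σ_{1 ≤ i < j ≤ p} t_i·t_j. In other words, the sum of pairwise products over all p-partitions of n into positive parts is maximized by the balanced partition. -/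
/-!
Since `(∑ aᵢ)² = 2 ∑_{i<j} aᵢ aⱼ + ∑ aᵢ²`, for a fixed total `n` maximising the pairwise sum
amounts to minimising `∑ aᵢ²`. With `q = ⌊n/p⌋`, the sum `∑ aᵢ²` differs from
`∑ (aᵢ - q)(aᵢ - q - 1)` by a quantity depending only on `n`, `p` and `q`. Each term of the
latter is a product of consecutive integers, hence nonnegative, and all of them vanish for the
balanced partition, whose parts are `q` or `q + 1`.
-/

open Finset

theorem sq_sum_eq_two_mul_sum_lt_add_sum_sq {ι R : Type*} [LinearOrder ι] [Fintype ι]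
    [CommSemiring R] (f : ι → R) :
    (∑ i, f i) ^ 2 = 2 * (∑ i, ∑ j, if i < j then f i * f j else 0) + ∑ i, f i ^ 2 := by
  have hsplit (i j : ι) : f i * f j =
      (if i < j then f i * f j else 0) + (if j < i then f j * f i else 0)
        + (if i = j then f i ^ 2 else 0) := by
    rcases lt_trichotomy i j with h | rfl | h
    · simp [h, h.not_gt, h.ne]
    · simp [sq]
    · simp [h, h.not_gt, h.ne', mul_comm]
  rw [sq, sum_mul_sum, sum_congr rfl fun i _ => sum_congr rfl fun j _ => hsplit i j]
  simp only [sum_add_distrib, sum_ite_eq, mem_univ, if_true]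
  rw [sum_comm (f := fun i j => if j < i then f j * f i else 0)]
  ring

theorem sum_sq_le_sum_sq_of_forall_eq_or_eq_add_one {ι : Type*} [Fintype ι] {f g : ι → ℤ}
    (q : ℤ) (hg : ∀ i, g i = q ∨ g i = q + 1) (hfg : ∑ i, f i = ∑ i, g i) :
    ∑ i, g i ^ 2 ≤ ∑ i, f i ^ 2 := by
  have expand (h : ι → ℤ) : ∑ i, (h i - q) * (h i - q - 1) =
      ∑ i, h i ^ 2 - (2 * q + 1) * ∑ i, h i + Fintype.card ι * (q ^ 2 + q) := by
    rw [← card_univ, ← nsmul_eq_mul, ← sum_const, mul_sum, ← sum_sub_distrib, ← sum_add_distrib]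
    exact sum_congr rfl fun i _ => by ring
  have hg0 : ∑ i, (g i - q) * (g i - q - 1) = 0 :=
    sum_eq_zero fun i _ => by rcases hg i with h | h <;> simp [h]
  have hf0 : 0 ≤ ∑ i, (f i - q) * (f i - q - 1) :=
    sum_nonneg fun i _ => by rcases le_or_gt (f i) q with h | h <;> nlinarith
  rw [expand] at hg0
  rw [expand, hfg] at hf0
  linarith

theorem sum_lt_mul_le_of_sum_eq_of_sum_sq_le {ι : Type*} [LinearOrder ι] [Fintype ι]
    {f g : ι → ℕ} (hfg : ∑ i, f i = ∑ i, g i) (hsq : ∑ i, g i ^ 2 ≤ ∑ i, f i ^ 2) :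
    (∑ i, ∑ j, if i < j then f i * f j else 0) ≤ ∑ i, ∑ j, if i < j then g i * g j else 0 := by
  have hf := sq_sum_eq_two_mul_sum_lt_add_sum_sq f
  have hg := sq_sum_eq_two_mul_sum_lt_add_sum_sq g
  rw [hfg] at hf
  omega

def balancedPartition (n p : ℕ) (i : Fin p) : ℕ :=
  if (i : ℕ) < p - n % p then n / p else n / p + 1

theorem sum_balancedPartition {n p : ℕ} (hp : 0 < p) : ∑ i, balancedPartition n p i = n := by
  have hr : n % p ≤ p := (Nat.mod_lt n hp).le
  have (i : Fin p) : balancedPartition n p i = n / p + if (i : ℕ) < p - n % p then 0 else 1 := by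
    unfold balancedPartition; split_ifs <;> rfl
  simp only [this, sum_add_distrib, sum_const, card_univ, Fintype.card_fin, smul_eq_mul,
    sum_ite, filter_not, card_sdiff, Fin.card_filter_val_lt, inter_univ, mul_zero, zero_add,
    min_eq_right (Nat.sub_le p _)]
  have := Nat.div_add_mod n p
  omega

theorem lucky_theorem_general (n p : ℕ) (hp : 2 ≤ p)
    (a : Fin p → ℕ) (hsum : ∑ i, a i = n) :
    (∑ i : Fin p, ∑ j : Fin p, if i < j then a i * a j else 0) ≤
      ∑ i : Fin p, ∑ j : Fin p, if i < j then
        (if (i : ℕ) < p - n % p then n / p else n / p + 1) *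
          (if (j : ℕ) < p - n % p then n / p else n / p + 1)
      else 0 := by
  have hsum_eq : ∑ i, a i = ∑ i, balancedPartition n p i := by
    rw [hsum, sum_balancedPartition (by omega)]
  have hbalanced (i : Fin p) : (balancedPartition n p i : ℤ) = (n / p : ℕ) ∨
      (balancedPartition n p i : ℤ) = (n / p : ℕ) + 1 := by
    unfold balancedPartition; split_ifs <;> simp
  have hsq := sum_sq_le_sum_sq_of_forall_eq_or_eq_add_one (f := fun i => (a i : ℤ)) _ hbalanced
    (by exact_mod_cast hsum_eq)
  exact sum_lt_mul_le_of_sum_eq_of_sum_sq_le hsum_eq (by exact_mod_cast hsq)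

/-- **Lucky's Theorem.** Among all partitions of `n` into `p` positive parts, the sum of
pairwise products is maximised by the balanced partition having `p - n % p` parts equal
to `⌊n/p⌋` and `n % p` parts equal to `⌈n/p⌉`. -/
theorem lucky_theorem (n p : ℕ) (hn : 2 ≤ n) (hp : 2 ≤ p) (hpn : p ≤ n)
    (a : Fin p → ℕ) (ha : ∀ i, 1 ≤ a i) (hsum : ∑ i, a i = n) :
    (∑ i : Fin p, ∑ j : Fin p, if i < j then a i * a j else 0) ≤
      ∑ i : Fin p, ∑ j : Fin p, if i < j then
        (if (i : ℕ) < p - n % p then n / p else n / p + 1) *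
          (if (j : ℕ) < p - n % p then n / p else n / p + 1)
      else 0 :=
  lucky_theorem_general n p hp a hsum
end

section
/- Let G be a finite connected bipartite simple graph with at least one edge, whose (unique) bipartition has parts of sizes m₁ and m₂. Then ζ(G) = m₁·m₂ − ε(G), where ε(G) is the number of edges of G. -/
open SimpleGraph

/-!
In a connected graph the parity of the length of a walk from `u` to `v` decides whether a proper
two-colouring gives `u` and `v` the same colour, so every chromatic colouring of a connected
bipartite graph has the two sides `A`, `Aᶜ` as its colour classes. Its completion edges are then
the `|A| * |Aᶜ|` pairs joining the two sides, minus the edges of `G`.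
-/

open Finset

namespace SimpleGraph

variable {V : Type*} {G : SimpleGraph V}

theorem Connected.coloring_eq_iff (hG : G.Connected) (c d : G.Coloring Bool) (u v : V) :
    c u = c v ↔ d u = d v := by
  obtain ⟨p⟩ := hG u v
  exact Bool.eq_iff_iff.trans <| (c.even_length_iff_congr p).symm.trans <|
    (d.even_length_iff_congr p).trans Bool.eq_iff_iff.symm

theorem Connected.eq_iff_mem_iff_mem {α : Type*} {s : Set V} {c : V → α} {a b : α}
    (hG : G.Connected) (hs : G.IsBipartiteWith s sᶜ) (hc : ∀ u v, G.Adj u v → c u ≠ c v)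
    (hab : ∀ v, c v = a ∨ c v = b) (u v : V) :
    c u = c v ↔ (u ∈ s ↔ v ∈ s) := by
  classical
  have hca : ∀ u v, c u = c v ↔ (c u = a ↔ c v = a) := fun u v ↦ by
    rcases hab u with hu | hu <;> rcases hab v with hv | hv <;> simp [hu, hv, eq_comm]
  let d : G.Coloring Bool := Coloring.mk (fun v ↦ decide (c v = a)) fun {u v} huv ↦ by
    simpa [hca] using hc u v huv
  let e : G.Coloring Bool := Coloring.mk (fun v ↦ decide (v ∈ s)) fun huv ↦ by
    rcases hs.mem_of_adj huv with ⟨hu, hv⟩ | ⟨hu, hv⟩ <;> simp_all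
  have hde : decide (c u = a) = decide (c v = a) ↔ decide (u ∈ s) = decide (v ∈ s) :=
    hG.coloring_eq_iff d e u v
  rwa [decide_eq_decide, decide_eq_decide, ← hca] at hde

theorem IsBipartiteWith.chromaticNumber_eq_two {s t : Set V} {u v : V}
    (hs : G.IsBipartiteWith s t) (huv : G.Adj u v) : G.chromaticNumber = 2 :=
  chromaticNumber_eq_two_iff.mpr ⟨hs.isBipartite, ne_bot_iff_exists_adj.mpr ⟨u, v, huv⟩⟩

theorem IsBipartiteWith.isChromaticColoring_ite {s : Set V} [DecidablePred (· ∈ s)] {u v : V}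
    (hs : G.IsBipartiteWith s sᶜ) (huv : G.Adj u v) :
    IsChromaticColoring G (fun w ↦ if w ∈ s then 0 else 1) := by
  obtain ⟨x, hx, y, hy⟩ : ∃ x ∈ s, ∃ y, y ∉ s := by
    rcases hs.mem_of_adj huv with ⟨hu, hv⟩ | ⟨hu, hv⟩
    exacts [⟨u, hu, v, hv⟩, ⟨v, hv, u, hu⟩]
  have hrange : Set.range (fun w ↦ if w ∈ s then 0 else 1) = {0, 1} := by
    refine Set.Subset.antisymm ?_ ?_
    · rintro _ ⟨w, rfl⟩
      by_cases hw : w ∈ s <;> simp [hw]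
    · rintro _ (rfl | rfl)
      exacts [⟨x, if_pos hx⟩, ⟨y, if_neg hy⟩]
  refine ⟨fun a b hab ↦ ?_, ?_⟩
  · rcases hs.mem_of_adj hab with ⟨ha, hb⟩ | ⟨ha, hb⟩ <;> simp_all
  · rw [hs.chromaticNumber_eq_two huv, hrange, Set.ncard_pair zero_ne_one]
    rfl

theorem ncard_edgeSet_top_between_compl [Fintype V] [DecidableEq V] (s : Finset V) :
    ((⊤ : SimpleGraph V).between s (sᶜ : Finset V)).edgeSet.ncard = #s * #sᶜ := by
  have hdeg : ∀ v ∈ s, ((⊤ : SimpleGraph V).between s (sᶜ : Finset V)).degree v = #sᶜ :=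
    fun v hv ↦ by
      rw [← card_neighborFinset_eq_degree]
      congr 1
      ext w
      simp only [mem_neighborFinset, between_adj, top_adj, mem_compl, mem_coe, hv]
      grind
  rw [← coe_edgeFinset, Set.ncard_coe_finset, ← isBipartiteWith_sum_degrees_eq_card_edges
    (between_isBipartiteWith (disjoint_coe.2 disjoint_compl_right)), sum_congr rfl hdeg,
    sum_const, smul_eq_mul]

end SimpleGraph

open SimpleGraph

theorem IsChromaticColoring.exists_eq_or_eq {V : Type*} {G : SimpleGraph V} {c : V → ℕ}
    (hc : IsChromaticColoring G c) (hχ : G.chromaticNumber = 2) :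
    ∃ a b, ∀ v, c v = a ∨ c v = b := by
  have hcard : (Set.range c).ncard = 2 := by exact_mod_cast hχ ▸ hc.2
  obtain ⟨a, b, -, hab⟩ := Set.ncard_eq_two.mp hcard
  exact ⟨a, b, fun v ↦ by simpa [hab] using Set.mem_range_self (f := c) v⟩

theorem completionEdges_eq_edgeSet_sdiff {V : Type*} (G : SimpleGraph V) (c : V → ℕ) :
    completionEdges G c = ((⊤ : SimpleGraph ℕ).comap c \ G).edgeSet := by
  ext e
  induction e using Sym2.ind with
  | h x y =>
    simp only [completionEdges, Set.mem_ofPred_eq, mem_edgeSet, sdiff_adj, comap_adj, top_adj]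
    constructor
    · rintro ⟨u, v, huv, -, hadj, hc⟩
      rcases Sym2.eq_iff.mp huv with ⟨rfl, rfl⟩ | ⟨rfl, rfl⟩
      exacts [⟨hc, hadj⟩, ⟨Ne.symm hc, fun h ↦ hadj h.symm⟩]
    · rintro ⟨hc, hadj⟩
      exact ⟨x, y, rfl, fun h ↦ hc (congrArg c h), hadj, hc⟩

theorem ncard_completionEdges_of_connected {V : Type*} [Fintype V] [DecidableEq V]
    {G : SimpleGraph V} {A : Finset V} {c : V → ℕ} {a b : ℕ} (hG : G.Connected)
    (hA : G.IsBipartiteWith A (↑A)ᶜ) (hc : ∀ u v, G.Adj u v → c u ≠ c v)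
    (hab : ∀ v, c v = a ∨ c v = b) :
    (completionEdges G c).ncard = #A * #Aᶜ - G.edgeSet.ncard := by
  have hK : (⊤ : SimpleGraph ℕ).comap c = (⊤ : SimpleGraph V).between A (Aᶜ : Finset V) := by
    ext u v
    simp only [comap_adj, top_adj, between_adj, ne_eq, hG.eq_iff_mem_iff_mem hA hc hab,
      coe_compl, mem_coe, Set.mem_compl_iff]
    grind
  have hle : G ≤ (⊤ : SimpleGraph V).between A (Aᶜ : Finset V) :=
    fun u v huv ↦ ⟨huv.ne, by simpa using hA.mem_of_adj huv⟩
  rw [completionEdges_eq_edgeSet_sdiff, hK, edgeSet_sdiff, Set.ncard_sdiff (edgeSet_mono hle),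
    ncard_edgeSet_top_between_compl]

theorem zeta_eq_of_forall_ncard_eq {V : Type*} {G : SimpleGraph V} {k : ℕ}
    (hex : ∃ c, IsChromaticColoring G c)
    (hk : ∀ c, IsChromaticColoring G c → (completionEdges G c).ncard = k) : zeta G = k := by
  obtain ⟨c₀, hc₀⟩ := hex
  have hset : {m | ∃ c, IsChromaticColoring G c ∧ m = (completionEdges G c).ncard} = {k} := by
    ext m
    constructor
    · rintro ⟨c, hc, rfl⟩
      exact hk c hc
    · rintro rfl
      exact ⟨c₀, hc₀, (hk c₀ hc₀).symm⟩
  rw [zeta, hset, csSup_singleton]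

/-- For a connected bipartite graph $G$ with at least one edge and parts of sizes
$m_1, m_2$, one has $ζ(G) = m_1 m_2 - ε(G)$. -/
theorem zeta_bipartite {V : Type*} [Fintype V] [DecidableEq V] (G : SimpleGraph V)
    (hconn : G.Connected) (hedge : ∃ u v, G.Adj u v) (A : Finset V)
    (hbip : ∀ u v, G.Adj u v → ((u ∈ A ∧ v ∉ A) ∨ (u ∉ A ∧ v ∈ A))) :
    zeta G = A.card * Aᶜ.card - G.edgeSet.ncard := by
  have hA : G.IsBipartiteWith A (↑A)ᶜ := ⟨disjoint_compl_right, by simpa using hbip⟩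
  obtain ⟨u, v, huv⟩ := hedge
  refine zeta_eq_of_forall_ncard_eq ⟨_, hA.isChromaticColoring_ite huv⟩ fun c hc ↦ ?_
  obtain ⟨a, b, hab⟩ := hc.exists_eq_or_eq (hA.chromaticNumber_eq_two huv)
  exact ncard_completionEdges_of_connected hconn hA hc.1 hab
end

section
/- For every even integer n ≥ 4, the cycle graph C_n satisfies ζ(C_n) = n(n − 4)/4. -/
open SimpleGraph

/-!
An even cycle is 2-chromatic, and in any proper 2-colouring the rotation `v ↦ v + 1` swaps the
two colour classes, so each class has `n / 2` vertices. The pairs of vertices with different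
colours are then the `(n / 2)²` pairs across the classes; the `n` edges of the cycle are among
them, which leaves `(n / 2)² - n = n (n - 4) / 4` completion edges for every chromatic colouring.
-/

open Finset

theorem Nat.half_mul_half_sub_self_of_even {n : ℕ} (hn : Even n) :
    n / 2 * (n / 2) - n = n * (n - 4) / 4 := by
  obtain ⟨k, rfl⟩ := hn
  rw [show (k + k) / 2 = k by omega]
  rcases Nat.lt_or_ge k 2 with hk | hk
  · interval_cases k <;> rfl
  · obtain ⟨j, rfl⟩ := Nat.exists_eq_add_of_le hk
    calc (2 + j) * (2 + j) - (2 + j + (2 + j)) = (2 + j) * j := Nat.sub_eq_of_eq_add (by ring)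
      _ = 4 * ((2 + j) * j) / 4 := (Nat.mul_div_cancel_left _ four_pos).symm
      _ = (2 + j + (2 + j)) * (2 + j + (2 + j) - 4) / 4 := by
        rw [show 2 + j + (2 + j) - 4 = 2 * j by omega]
        ring_nf

theorem Finset.card_image_sym2Mk_product {V : Type*} [DecidableEq V] {s t : Finset V}
    (hst : Disjoint s t) : #((s ×ˢ t).image fun p ↦ s(p.1, p.2)) = #s * #t := by
  rw [card_image_of_injOn, card_product]
  rintro ⟨a, b⟩ hab ⟨a', b'⟩ hab' heq
  simp only [coe_product, Set.mem_prod, mem_coe] at hab hab'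
  rcases Sym2.eq_iff.mp heq with ⟨rfl, rfl⟩ | ⟨rfl, rfl⟩
  · rfl
  · exact (Finset.disjoint_left.mp hst hab.1 hab'.2).elim

namespace SimpleGraph

section Coloring

variable {V α : Type*}

def bichromaticPairs (c : V → α) : Set (Sym2 V) :=
  {e | ∃ u v, e = s(u, v) ∧ c u ≠ c v}

theorem completionEdges_eq_bichromaticPairs_diff (G : SimpleGraph V) (c : V → ℕ) :
    completionEdges G c = bichromaticPairs c \ G.edgeSet := by
  ext e
  constructor
  · rintro ⟨u, v, rfl, -, hnadj, hne⟩
    exact ⟨⟨u, v, rfl, hne⟩, hnadj⟩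
  · rintro ⟨⟨u, v, rfl, hne⟩, hnadj⟩
    exact ⟨u, v, rfl, fun h ↦ hne (congrArg c h), hnadj, hne⟩

theorem edgeSet_subset_bichromaticPairs {G : SimpleGraph V} {c : V → α}
    (hc : ∀ u v, G.Adj u v → c u ≠ c v) : G.edgeSet ⊆ bichromaticPairs c := by
  intro e he
  induction e using Sym2.ind with
  | h u v => exact ⟨u, v, rfl, hc u v he⟩

theorem ncard_completionEdges [Finite V] {G : SimpleGraph V} {c : V → ℕ}
    (hc : ∀ u v, G.Adj u v → c u ≠ c v) :
    (completionEdges G c).ncard = (bichromaticPairs c).ncard - G.edgeSet.ncard := by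
  rw [completionEdges_eq_bichromaticPairs_diff,
    Set.ncard_sdiff (edgeSet_subset_bichromaticPairs hc)]

variable [Fintype V] [DecidableEq V] [DecidableEq α] {c : V → α} {a b : α}

theorem bichromaticPairs_eq_image (hab : a ≠ b) (hcol : ∀ v, c v = a ∨ c v = b) :
    bichromaticPairs c =
      ((({v | c v = a} : Finset V) ×ˢ ({v | c v = b} : Finset V)).image
        fun p ↦ s(p.1, p.2) : Finset (Sym2 V)) := by
  ext e
  simp only [bichromaticPairs, Set.mem_ofPred_eq, coe_image, Set.mem_image,
    mem_coe, mem_product, mem_filter, mem_univ, true_and]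
  constructor
  · rintro ⟨u, v, rfl, huv⟩
    rcases hcol u with hu | hu <;> rcases hcol v with hv | hv
    · exact (huv (hu.trans hv.symm)).elim
    · exact ⟨(u, v), ⟨hu, hv⟩, rfl⟩
    · exact ⟨(v, u), ⟨hv, hu⟩, Sym2.eq_swap⟩
    · exact (huv (hu.trans hv.symm)).elim
  · rintro ⟨⟨u, v⟩, ⟨hu, hv⟩, rfl⟩
    exact ⟨u, v, rfl, by rw [hu, hv]; exact hab⟩

theorem ncard_bichromaticPairs (hab : a ≠ b) (hcol : ∀ v, c v = a ∨ c v = b) :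
    (bichromaticPairs c).ncard = #{v | c v = a} * #{v | c v = b} := by
  rw [bichromaticPairs_eq_image hab hcol, Set.ncard_coe_finset,
    card_image_sym2Mk_product]
  exact disjoint_filter.mpr fun v _ hva hvb ↦ hab (hva.symm.trans hvb)

end Coloring

theorem _root_.IsChromaticColoring.exists_eq_or_eq_s8 {V : Type*} {G : SimpleGraph V} {c : V → ℕ}
    (hc : IsChromaticColoring G c) (hχ : G.chromaticNumber = 2) :
    ∃ a b, a ≠ b ∧ ∀ v, c v = a ∨ c v = b := by
  have hcard : (Set.range c).ncard = 2 := by exact_mod_cast hc.2.trans hχ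
  obtain ⟨a, b, hab, hrange⟩ := Set.ncard_eq_two.mp hcard
  exact ⟨a, b, hab, fun v ↦ by simpa [hrange] using Set.mem_range_self (f := c) v⟩

theorem isChromaticColoring_toNat {V : Type*} {G : SimpleGraph V} (d : G.Coloring Bool)
    (hχ : G.chromaticNumber = 2) : IsChromaticColoring G fun v ↦ (d v).toNat := by
  obtain ⟨u, v, huv⟩ := ne_bot_iff_exists_adj.mp
    (two_le_chromaticNumber_iff_ne_bot.mp hχ.ge)
  have hsurj : Function.Surjective d := fun b ↦ by
    by_cases hb : d u = b
    · exact ⟨u, hb⟩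
    · exact ⟨v, by grind [cases Bool, d.valid huv]⟩
  refine ⟨fun x y h ↦ (Function.LeftInverse.injective Bool.ofNat_toNat).ne (d.valid h), ?_⟩
  rw [show (fun v ↦ (d v).toNat) = Bool.toNat ∘ d from rfl, hsurj.range_comp, Bool.range_eq, hχ,
    Set.ncard_pair (by decide)]
  rfl

theorem zeta_eq_of_forall_ncard_completionEdges_eq {V : Type*} {G : SimpleGraph V} {N : ℕ}
    (hex : ∃ c, IsChromaticColoring G c)
    (h : ∀ c, IsChromaticColoring G c → (completionEdges G c).ncard = N) : zeta G = N := by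
  have hvalues : {m | ∃ c, IsChromaticColoring G c ∧ m = (completionEdges G c).ncard} = {N} := by
    ext m
    constructor
    · rintro ⟨c, hc, rfl⟩
      exact h c hc
    · rintro rfl
      obtain ⟨c, hc⟩ := hex
      exact ⟨c, hc, (h c hc).symm⟩
  rw [zeta, hvalues, csSup_singleton]

section Cycle

variable {n : ℕ}

theorem cycleGraph_adj_add_one (v : Fin (n + 2)) : (cycleGraph (n + 2)).Adj v (v + 1) :=
  cycleGraph_adj.mpr (Or.inr (add_sub_cancel_left v 1))

theorem card_edgeFinset_cycleGraph : #(cycleGraph (n + 3)).edgeFinset = n + 3 := by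
  have h := sum_degrees_eq_twice_card_edges (cycleGraph (n + 3))
  simp only [cycleGraph_degree_three_le, sum_const, card_univ, Fintype.card_fin,
    smul_eq_mul] at h
  omega

theorem card_filter_eq_eq_of_cycleGraph {α : Type*} [DecidableEq α] {c : Fin (n + 2) → α}
    {a b : α}
    (hc : ∀ u v, (cycleGraph (n + 2)).Adj u v → c u ≠ c v) (hcol : ∀ v, c v = a ∨ c v = b) :
    #{v | c v = a} = #{v | c v = b} := by
  refine card_equiv (Equiv.addRight 1) fun v ↦ ?_
  have hne := hc _ _ (cycleGraph_adj_add_one v)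
  simp only [mem_filter, mem_univ, true_and, Equiv.coe_addRight]
  rcases hcol v with hv | hv <;> rcases hcol (v + 1) with hw | hw <;> grind

theorem ncard_completionEdges_cycleGraph {c : Fin (n + 3) → ℕ} {a b : ℕ}
    (hc : ∀ u v, (cycleGraph (n + 3)).Adj u v → c u ≠ c v) (hab : a ≠ b)
    (hcol : ∀ v, c v = a ∨ c v = b) :
    (completionEdges (cycleGraph (n + 3)) c).ncard = (n + 3) / 2 * ((n + 3) / 2) - (n + 3) := by
  have hsame : #{v | c v = a} = #{v | c v = b} := card_filter_eq_eq_of_cycleGraph hc hcol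
  have htotal : #{v | c v = a} + #{v | c v = b} = n + 3 := by
    have hnot : univ.filter (fun v ↦ c v ≠ a) = univ.filter (fun v ↦ c v = b) :=
      filter_congr fun v _ ↦ by grind
    simpa [hnot] using card_filter_add_card_filter_not (s := univ) (fun v ↦ c v = a)
  rw [ncard_completionEdges hc, ncard_bichromaticPairs hab hcol, ← coe_edgeFinset,
    Set.ncard_coe_finset, card_edgeFinset_cycleGraph, ← hsame,
    show #{v | c v = a} = (n + 3) / 2 by omega]

end Cycle

end SimpleGraph

/-- For even `n ≥ 4`, `ζ(C_n) = n(n-4)/4`. -/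
theorem zeta_cycle_even (n : ℕ) (hn : 4 ≤ n) (hev : Even n) :
    zeta (cycleGraph n) = n * (n - 4) / 4 := by
  obtain ⟨k, rfl⟩ : ∃ k, n = k + 3 := ⟨n - 3, by omega⟩
  have hχ := chromaticNumber_cycleGraph_of_even (k + 3) (by omega) hev
  rw [← Nat.half_mul_half_sub_self_of_even hev]
  refine zeta_eq_of_forall_ncard_completionEdges_eq
    ⟨_, isChromaticColoring_toNat (cycleGraph.bicoloring_of_even _ hev) hχ⟩ fun c hc ↦ ?_
  obtain ⟨a, b, hab, hcol⟩ := hc.exists_eq_or_eq_s8 hχ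
  exact ncard_completionEdges_cycleGraph hc.1 hab hcol
end

section
/- For every odd integer n ≥ 5 with n ≡ 2 (mod 3), the cycle graph C_n satisfies ζ(C_n) = (n² − 3n − 1)/3; equivalently, writing n = 3k + 2, ζ(C_n) = (k+1)² + 2k(k+1) − n, the value obtained from the balanced 3-partition (k+1, k+1, k) of n. -/
open SimpleGraph Finset

lemma count_mod3 (m r : ℕ) (hr : r < 3) :
    ((Finset.range m).filter (fun i => i % 3 = r)).card
      = m / 3 + if r < m % 3 then 1 else 0 := by
  induction m with
  | zero => simp
  | succ m ih =>
    rw [Finset.range_add_one, Finset.filter_insert]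
    by_cases h : m % 3 = r
    · rw [if_pos h, Finset.card_insert_of_notMem
        (fun hm => absurd (Finset.mem_filter.mp hm).1 (by simp)), ih]
      split_ifs <;> omega
    · rw [if_neg h, ih]; split_ifs <;> omega

lemma fiber_card_c0 (n r : ℕ) (hr : r < 3) :
    (Finset.univ.filter (fun v : Fin n => v.val % 3 = r)).card
      = n / 3 + if r < n % 3 then 1 else 0 := by
  rw [← count_mod3 _ _ hr, Finset.card_filter, Finset.card_filter]
  exact Fin.sum_univ_eq_sum_range (fun i => if i % 3 = r then 1 else 0) n

lemma sumsq_lb (a b c k : ℕ) (h : a + b + c = 3 * k + 2) :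
    3 * (k * k) + 4 * k + 2 ≤ a * a + b * b + c * c := by
  have hz : (a : ℤ) + b + c = 3 * k + 2 := by exact_mod_cast h
  have h3 : (9 * ((k : ℤ) * k) + 12 * k + 4 : ℤ)
      ≤ 3 * ((a : ℤ) * a + (b : ℤ) * b + (c : ℤ) * c) := by
    nlinarith [sq_nonneg ((a : ℤ) - b), sq_nonneg ((b : ℤ) - c), sq_nonneg ((a : ℤ) - c)]
  have h4 : 9 * (k * k) + 12 * k + 4 ≤ 3 * (a * a + b * b + c * c) := by exact_mod_cast h3
  generalize a * a + b * b + c * c = S at h4 ⊢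
  generalize k * k = K at h4 ⊢
  omega

/-- The graph joining vertices with different colours. -/
def diffG {n : ℕ} (c : Fin n → ℕ) : SimpleGraph (Fin n) where
  Adj u v := c u ≠ c v
  symm := ⟨fun u v h => Ne.symm h⟩
  loopless := ⟨fun v h => h rfl⟩

instance {n : ℕ} (c : Fin n → ℕ) : DecidableRel (diffG c).Adj :=
  fun u v => inferInstanceAs (Decidable ¬(c u = c v))

lemma completionEdges_eq {n : ℕ} (c : Fin n → ℕ)
    (hc : ∀ u v, (cycleGraph n).Adj u v → c u ≠ c v) :
    completionEdges (cycleGraph n) c = (diffG c \ cycleGraph n).edgeSet := by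
  ext e
  induction e using Sym2.ind with
  | _ u v =>
    simp only [completionEdges, Set.mem_setOf_eq, mem_edgeSet, sdiff_adj]
    constructor
    · rintro ⟨a, b, hab, hne, hnadj, hcne⟩
      rw [Sym2.eq_iff] at hab
      rcases hab with ⟨rfl, rfl⟩ | ⟨rfl, rfl⟩
      · exact ⟨hcne, hnadj⟩
      · exact ⟨Ne.symm hcne, fun h => hnadj h.symm⟩
    · rintro ⟨hcne, hnadj⟩
      exact ⟨u, v, rfl, fun h => hcne (by rw [h]), hnadj, hcne⟩

lemma cycle_le_diffG {n : ℕ} (c : Fin n → ℕ)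
    (hc : ∀ u v, (cycleGraph n).Adj u v → c u ≠ c v) :
    cycleGraph n ≤ diffG c := fun {u v} h => hc u v h

lemma cycle_edge_card (m : ℕ) :
    #(cycleGraph (m + 3)).edgeFinset * 2 = 2 * (m + 3) := by
  have h := SimpleGraph.sum_degrees_eq_twice_card_edges (cycleGraph (m + 3))
  have h2 : ∑ v : Fin (m + 3), (cycleGraph (m + 3)).degree v = 2 * (m + 3) := by
    rw [Finset.sum_congr rfl (fun v _ => cycleGraph_degree_three_le)]
    simp [Finset.card_univ, mul_comm]
  omega

lemma diffG_degree {n : ℕ} (c : Fin n → ℕ) (v : Fin n) :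
    (diffG c).degree v + #(Finset.univ.filter (fun u : Fin n => c u = c v)) = n := by
  classical
  rw [SimpleGraph.degree]
  have hnb : (diffG c).neighborFinset v
      = Finset.univ \ Finset.univ.filter (fun u : Fin n => c u = c v) := by
    ext u
    simp only [mem_neighborFinset, Finset.mem_sdiff, Finset.mem_univ, true_and,
      Finset.mem_filter]
    exact ⟨fun h h' => h h'.symm, fun h h' => h h'.symm⟩
  rw [hnb, Finset.card_sdiff_of_subset (Finset.filter_subset _ _)]
  have hle := Finset.card_filter_le Finset.univ (fun u : Fin n => c u = c v)
  simp only [Finset.card_univ, Fintype.card_fin] at *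
  omega

lemma completion_count (m : ℕ) (c : Fin (m + 3) → ℕ)
    (hc : ∀ u v, (cycleGraph (m + 3)).Adj u v → c u ≠ c v) :
    (completionEdges (cycleGraph (m + 3)) c).ncard * 2
      + (∑ i ∈ Finset.univ.image c,
          #(Finset.univ.filter (fun v : Fin (m + 3) => c v = i))
            * #(Finset.univ.filter (fun v : Fin (m + 3) => c v = i)))
      + 2 * (m + 3)
      = (m + 3) * (m + 3) := by
  classical
  have h1 : (completionEdges (cycleGraph (m + 3)) c).ncard
      = #(diffG c \ cycleGraph (m + 3)).edgeFinset := by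
    rw [completionEdges_eq c hc, ← coe_edgeFinset, Set.ncard_coe_finset]
  have hle : (cycleGraph (m + 3)).edgeFinset ⊆ (diffG c).edgeFinset := by
    rw [edgeFinset_subset_edgeFinset]; exact cycle_le_diffG c hc
  have h2 : #(diffG c \ cycleGraph (m + 3)).edgeFinset + #(cycleGraph (m + 3)).edgeFinset
      = #(diffG c).edgeFinset := by
    rw [edgeFinset_sdiff, Finset.card_sdiff_of_subset hle]
    exact Nat.sub_add_cancel (Finset.card_le_card hle)
  have h3 : 2 * #(diffG c).edgeFinset
      + ∑ v : Fin (m + 3), #(Finset.univ.filter (fun u : Fin (m + 3) => c u = c v))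
      = (m + 3) * (m + 3) := by
    have hs := SimpleGraph.sum_degrees_eq_twice_card_edges (diffG c)
    have hsum : ∑ v : Fin (m + 3),
        ((diffG c).degree v + #(Finset.univ.filter (fun u : Fin (m + 3) => c u = c v)))
        = ∑ _v : Fin (m + 3), (m + 3) :=
      Finset.sum_congr rfl (fun v _ => diffG_degree c v)
    rw [Finset.sum_add_distrib, hs] at hsum
    simpa [Finset.card_univ, mul_comm] using hsum
  have h4 : ∑ v : Fin (m + 3), #(Finset.univ.filter (fun u : Fin (m + 3) => c u = c v))
      = ∑ i ∈ Finset.univ.image c,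
          #(Finset.univ.filter (fun v : Fin (m + 3) => c v = i))
            * #(Finset.univ.filter (fun v : Fin (m + 3) => c v = i)) := by
    have := Finset.sum_comp (s := (Finset.univ : Finset (Fin (m + 3))))
      (fun i => #(Finset.univ.filter (fun u : Fin (m + 3) => c u = i))) c
    simpa [smul_eq_mul] using this
  have h5 := cycle_edge_card m
  rw [h1]
  omega

lemma cycle_adj_val {n : ℕ} (hn : 2 ≤ n) {u v : Fin n}
    (h : (cycleGraph n).Adj u v) :
    u.val = (v.val + 1) % n ∨ v.val = (u.val + 1) % n := by
  haveI : NeZero n := ⟨by omega⟩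
  rw [cycleGraph_adj'] at h
  rcases h with h | h
  · left
    have h1 : u - v = 1 := Fin.ext (by
      rw [h, Fin.val_one']; exact (Nat.mod_eq_of_lt (by omega)).symm)
    have h2 : u = 1 + v := by rw [← h1, sub_add_cancel]
    rw [h2, Fin.val_add, Fin.val_one', Nat.mod_eq_of_lt (by omega : 1 < n), Nat.add_comm]
  · right
    have h1 : v - u = 1 := Fin.ext (by
      rw [h, Fin.val_one']; exact (Nat.mod_eq_of_lt (by omega)).symm)
    have h2 : v = 1 + u := by rw [← h1, sub_add_cancel]
    rw [h2, Fin.val_add, Fin.val_one', Nat.mod_eq_of_lt (by omega : 1 < n), Nat.add_comm]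

lemma c0_proper {n : ℕ} (hn : 5 ≤ n) (hmod : n % 3 = 2) :
    ∀ u v : Fin n, (cycleGraph n).Adj u v → u.val % 3 ≠ v.val % 3 := by
  have key : ∀ u v : Fin n, u.val = (v.val + 1) % n → u.val % 3 ≠ v.val % 3 := by
    intro u v h
    have hv : v.val < n := v.isLt
    rcases Nat.lt_or_ge (v.val + 1) n with h' | h'
    · rw [Nat.mod_eq_of_lt h'] at h
      omega
    · have hv1 : v.val + 1 = n := by omega
      rw [hv1, Nat.mod_self] at h
      omega
  intro u v hadj
  rcases cycle_adj_val (by omega) hadj with h | h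
  · exact key u v h
  · exact fun he => key v u h he.symm

open Fin.NatCast in
lemma cycle_walk {n : ℕ} [NeZero n] (hn : 2 ≤ n) :
    ∀ (m : ℕ) (v : Fin n),
      ∃ w : (cycleGraph n).Walk v (v + (m : Fin n)), w.length = m := by
  intro m
  induction m with
  | zero => exact fun v => ⟨Walk.nil.copy rfl (by simp), by simp⟩
  | succ m ih =>
    intro v
    obtain ⟨w, hw⟩ := ih (v + 1)
    have hadj : (cycleGraph n).Adj v (v + 1) := by
      rw [cycleGraph_adj']
      right
      rw [add_sub_cancel_left, Fin.val_one']
      exact Nat.mod_eq_of_lt (by omega)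
    exact ⟨Walk.cons hadj (w.copy rfl (by push_cast; abel)), by simp [hw]⟩

open Fin.NatCast in
lemma chrom_eq_three {n : ℕ} (hn : 5 ≤ n) (hodd : Odd n) (hmod : n % 3 = 2) :
    (cycleGraph n).chromaticNumber = 3 := by
  haveI : NeZero n := ⟨by omega⟩
  apply le_antisymm
  · have hcol : (cycleGraph n).Colorable 3 := by
      refine ⟨SimpleGraph.Coloring.mk
        (fun v => (⟨v.val % 3, Nat.mod_lt _ (by omega)⟩ : Fin 3)) ?_⟩
      intro u v hadj
      simp only [ne_eq, Fin.mk.injEq]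
      exact c0_proper hn hmod u v hadj
    simpa using hcol.chromaticNumber_le
  · obtain ⟨w, hw⟩ := cycle_walk (n := n) (by omega) n 0
    have h0 : ((n : ℕ) : Fin n) = 0 := by
      exact_mod_cast Fin.natCast_self n
    exact Walk.three_le_chromaticNumber_of_odd_loop
      (w.copy rfl (by rw [h0, add_zero])) (by rwa [Walk.length_copy, hw])

lemma completion_count' (n : ℕ) (hn : 3 ≤ n) (c : Fin n → ℕ)
    (hc : ∀ u v, (cycleGraph n).Adj u v → c u ≠ c v) :
    (completionEdges (cycleGraph n) c).ncard * 2
      + (∑ i ∈ Finset.univ.image c,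
          #(Finset.univ.filter (fun v : Fin n => c v = i))
            * #(Finset.univ.filter (fun v : Fin n => c v = i)))
      + 2 * n
      = n * n := by
  obtain ⟨m, rfl⟩ : ∃ m, n = m + 3 := ⟨n - 3, by omega⟩
  exact completion_count m c hc

lemma range_ncard_eq_image_card {n : ℕ} (c : Fin n → ℕ) :
    (Set.range c).ncard = #(Finset.univ.image c) := by
  rw [show Set.range c = ↑(Finset.univ.image c) by
    rw [Finset.coe_image, Finset.coe_univ, Set.image_univ], Set.ncard_coe_finset]

lemma count_ub (n k : ℕ) (hn : 5 ≤ n) (hnk : n = 3 * k + 2) (c : Fin n → ℕ)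
    (hc : ∀ u v, (cycleGraph n).Adj u v → c u ≠ c v)
    (h3 : #(Finset.univ.image c) = 3) :
    (completionEdges (cycleGraph n) c).ncard ≤ 3 * (k * k) + k - 1 := by
  classical
  obtain ⟨x, y, z, hxy, hxz, hyz, himg⟩ := Finset.card_eq_three.mp h3
  have hkey := completion_count' n (by omega) c hc
  have hsum3 : ∑ i ∈ Finset.univ.image c,
        #(Finset.univ.filter (fun v : Fin n => c v = i))
          * #(Finset.univ.filter (fun v : Fin n => c v = i))
      = #(Finset.univ.filter (fun v : Fin n => c v = x))
          * #(Finset.univ.filter (fun v : Fin n => c v = x))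
        + #(Finset.univ.filter (fun v : Fin n => c v = y))
          * #(Finset.univ.filter (fun v : Fin n => c v = y))
        + #(Finset.univ.filter (fun v : Fin n => c v = z))
          * #(Finset.univ.filter (fun v : Fin n => c v = z)) := by
    rw [himg, show ({x, y, z} : Finset ℕ) = insert x (insert y {z}) from rfl,
      Finset.sum_insert (by simp [hxy, hxz]), Finset.sum_insert (by simp [hyz]),
      Finset.sum_singleton]
    ring
  have hpart : #(Finset.univ.filter (fun v : Fin n => c v = x))
        + #(Finset.univ.filter (fun v : Fin n => c v = y))
        + #(Finset.univ.filter (fun v : Fin n => c v = z)) = n := by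
    have h := Finset.card_eq_sum_card_image c (Finset.univ : Finset (Fin n))
    rw [himg, show ({x, y, z} : Finset ℕ) = insert x (insert y {z}) from rfl,
      Finset.sum_insert (by simp [hxy, hxz]), Finset.sum_insert (by simp [hyz]),
      Finset.sum_singleton] at h
    simp only [Finset.card_univ, Fintype.card_fin] at h
    omega
  have hlb : 3 * (k * k) + 4 * k + 2
      ≤ #(Finset.univ.filter (fun v : Fin n => c v = x))
          * #(Finset.univ.filter (fun v : Fin n => c v = x))
        + #(Finset.univ.filter (fun v : Fin n => c v = y))
          * #(Finset.univ.filter (fun v : Fin n => c v = y))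
        + #(Finset.univ.filter (fun v : Fin n => c v = z))
          * #(Finset.univ.filter (fun v : Fin n => c v = z)) :=
    sumsq_lb _ _ _ k (by omega)
  have hnn : n * n = 9 * (k * k) + 12 * k + 4 := by subst hnk; ring
  rw [hsum3, hnn] at hkey
  generalize #(Finset.univ.filter (fun v : Fin n => c v = x))
          * #(Finset.univ.filter (fun v : Fin n => c v = x))
        + #(Finset.univ.filter (fun v : Fin n => c v = y))
          * #(Finset.univ.filter (fun v : Fin n => c v = y))
        + #(Finset.univ.filter (fun v : Fin n => c v = z))
          * #(Finset.univ.filter (fun v : Fin n => c v = z)) = S at hkey hlb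
  generalize k * k = K at hkey hlb ⊢
  omega

lemma c0_image (n : ℕ) (hn : 5 ≤ n) :
    Finset.univ.image (fun v : Fin n => v.val % 3) = {0, 1, 2} := by
  apply Finset.Subset.antisymm
  · intro a ha
    rw [Finset.mem_image] at ha
    obtain ⟨v, -, rfl⟩ := ha
    have : v.val % 3 < 3 := Nat.mod_lt _ (by omega)
    simp only [Finset.mem_insert, Finset.mem_singleton]
    omega
  · intro a ha
    simp only [Finset.mem_insert, Finset.mem_singleton] at ha
    rw [Finset.mem_image]
    rcases ha with rfl | rfl | rfl
    · exact ⟨⟨0, by omega⟩, Finset.mem_univ _, by norm_num⟩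
    · exact ⟨⟨1, by omega⟩, Finset.mem_univ _, by norm_num⟩
    · exact ⟨⟨2, by omega⟩, Finset.mem_univ _, by norm_num⟩

lemma c0_count (n k : ℕ) (hn : 5 ≤ n) (hnk : n = 3 * k + 2) :
    (completionEdges (cycleGraph n) (fun v : Fin n => v.val % 3)).ncard
      = 3 * (k * k) + k - 1 := by
  have hmod : n % 3 = 2 := by omega
  have hkey := completion_count' n (by omega) (fun v : Fin n => v.val % 3)
    (c0_proper hn hmod)
  rw [c0_image n hn] at hkey
  rw [show ({0, 1, 2} : Finset ℕ) = insert 0 (insert 1 {2}) from rfl,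
    Finset.sum_insert (by simp), Finset.sum_insert (by simp),
    Finset.sum_singleton] at hkey
  have hf0 : #(Finset.univ.filter (fun v : Fin n => v.val % 3 = 0)) = k + 1 := by
    rw [fiber_card_c0 n 0 (by omega), if_pos (by omega)]; omega
  have hf1 : #(Finset.univ.filter (fun v : Fin n => v.val % 3 = 1)) = k + 1 := by
    rw [fiber_card_c0 n 1 (by omega), if_pos (by omega)]; omega
  have hf2 : #(Finset.univ.filter (fun v : Fin n => v.val % 3 = 2)) = k := by
    rw [fiber_card_c0 n 2 (by omega), if_neg (by omega)]; omega
  rw [hf0, hf1, hf2] at hkey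
  have hnn : n * n = 9 * (k * k) + 12 * k + 4 := by subst hnk; ring
  have hee : (k + 1) * (k + 1) = k * k + 2 * k + 1 := by ring
  rw [hnn, hee] at hkey
  generalize k * k = K at hkey ⊢
  omega

/-- For odd `n ≥ 5` with `n ≡ 2 (mod 3)`, `ζ(C_n) = (n² - 3n - 1)/3`; equivalently,
writing `n = 3k + 2`, this is `(k+1)² + 2k(k+1) - n`, the value obtained from the
balanced 3-partition `(k+1, k+1, k)` of `n`. -/
theorem zeta_cycle_odd_two_mod_three (n : ℕ) (hn : 5 ≤ n) (hodd : Odd n)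
    (hmod : n % 3 = 2) :
    zeta (cycleGraph n) = (n ^ 2 - 3 * n - 1) / 3 ∧
    ∀ k : ℕ, n = 3 * k + 2 →
      zeta (cycleGraph n) = (k + 1) ^ 2 + 2 * k * (k + 1) - n := by
  obtain ⟨k, rfl⟩ : ∃ k, n = 3 * k + 2 := ⟨n / 3, by omega⟩
  have hchrom := chrom_eq_three hn hodd hmod
  have hccc : IsChromaticColoring (cycleGraph (3 * k + 2))
      (fun v : Fin (3 * k + 2) => v.val % 3) := by
    refine ⟨c0_proper hn hmod, ?_⟩
    rw [hchrom, range_ncard_eq_image_card, c0_image _ hn]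
    norm_num
  have hub : ∀ m ∈ {m | ∃ c : Fin (3 * k + 2) → ℕ,
      IsChromaticColoring (cycleGraph (3 * k + 2)) c ∧
        m = (completionEdges (cycleGraph (3 * k + 2)) c).ncard},
      m ≤ 3 * (k * k) + k - 1 := by
    rintro m ⟨c, hcc, rfl⟩
    apply count_ub _ k hn rfl c hcc.1
    have h2 := hcc.2
    rw [hchrom] at h2
    have h3 : (Set.range c).ncard = 3 := by exact_mod_cast h2
    rwa [range_ncard_eq_image_card] at h3
  have hmem : 3 * (k * k) + k - 1 ∈ {m | ∃ c : Fin (3 * k + 2) → ℕ,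
      IsChromaticColoring (cycleGraph (3 * k + 2)) c ∧
        m = (completionEdges (cycleGraph (3 * k + 2)) c).ncard} :=
    ⟨_, hccc, (c0_count _ k hn rfl).symm⟩
  have hzeta : zeta (cycleGraph (3 * k + 2)) = 3 * (k * k) + k - 1 := by
    unfold zeta
    exact le_antisymm (csSup_le ⟨_, hmem⟩ hub) (le_csSup ⟨_, hub⟩ hmem)
  constructor
  · rw [hzeta]
    have h2 : (3 * k + 2) ^ 2 = 9 * (k * k) + 12 * k + 4 := by ring
    rw [h2]
    generalize k * k = K
    omega
  · intro k' hk'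
    have hkk : k' = k := by omega
    subst hkk
    rw [hzeta]
    have h2 : (k' + 1) ^ 2 = k' * k' + 2 * k' + 1 := by ring
    have h3 : 2 * k' * (k' + 1) = 2 * (k' * k') + 2 * k' := by ring
    rw [h2, h3]
    generalize k' * k' = K
    omega
end

section
/- For every integer n ≥ 3, the wheel graph W_{1,n} satisfies ζ(W_{1,n}) = ζ(C_n); that is, the chromatic completion number of the wheel equals that of its rim cycle, since all completion edges must lie within the rim. -/
open SimpleGraph

/-- The wheel graph `W_{1,n}`: the cycle `C_n` (on the `some` vertices) joined to a
central hub vertex `none` adjacent to every rim vertex. -/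
def wheelGraph (n : ℕ) : SimpleGraph (Option (Fin n)) where
  Adj u v := match u, v with
    | none, none => False
    | none, some _ => True
    | some _, none => True
    | some i, some j => (cycleGraph n).Adj i j
  symm := by
    constructor
    intro u v h
    cases u <;> cases v <;> simp_all
    exact ((cycleGraph n).adj_symm h)
  loopless := by
    constructor
    intro u h
    cases u with
    | none => exact h
    | some i => exact (cycleGraph n).irrefl h
/-! The hub is adjacent to every rim vertex, so in a proper colouring it carries a colour used
nowhere else and no completion edge meets it. Hence `χ(W_{1,n}) = χ(C_n) + 1`, the chromatic
colourings of the wheel are exactly the chromatic colourings of the rim extended by a fresh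
colour at the hub, and both have the same completion edges. Nothing here is specific to cycles:
the argument works for the cone over any finite graph. -/

namespace SimpleGraph

variable {V : Type*}

/-- The join `G + K₁`, with `none` as the apex. -/
def cone (G : SimpleGraph V) : SimpleGraph (Option V) where
  Adj u v := match u, v with
    | some i, some j => G.Adj i j
    | none, none => False
    | _, _ => True
  symm := ⟨by rintro (_ | i) (_ | j) h <;> first | trivial | exact G.adj_symm h⟩
  loopless := ⟨by rintro (_ | i) h <;> first | exact h | exact G.irrefl h⟩

variable (G : SimpleGraph V)

@[simp] lemma cone_adj_some_some {i j : V} : G.cone.Adj (some i) (some j) ↔ G.Adj i j := Iff.rfl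

@[simp] lemma cone_adj_none_some (i : V) : G.cone.Adj none (some i) := trivial

@[simp] lemma cone_adj_some_none (i : V) : G.cone.Adj (some i) none := trivial

lemma colorable_cone_add_one_iff {k : ℕ} : G.cone.Colorable (k + 1) ↔ G.Colorable k := by
  constructor
  · rintro ⟨d⟩
    let d' : G.Coloring {x // x ≠ d none} :=
      Coloring.mk (fun i => ⟨d (some i), d.valid (G.cone_adj_some_none i)⟩)
        fun h hd => d.valid (G.cone_adj_some_some.2 h) (congrArg Subtype.val hd)
    simpa [Fintype.card_subtype_compl] using d'.colorable
  · rintro ⟨d⟩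
    refine ⟨Coloring.mk (fun o => o.elim (Fin.last k) fun i => (d i).castSucc) ?_⟩
    rintro (_ | i) (_ | j) h
    · exact absurd h G.cone.irrefl
    · exact (Fin.castSucc_lt_last (d j)).ne'
    · exact (Fin.castSucc_lt_last (d i)).ne
    · exact fun hd => d.valid h (Fin.castSucc_injective _ hd)

lemma chromaticNumber_cone : G.cone.chromaticNumber = G.chromaticNumber + 1 := by
  have h : ∀ a : ℕ, G.cone.chromaticNumber ≤ a ↔ G.chromaticNumber + 1 ≤ a := by
    rintro (_ | k)
    · simp [chromaticNumber_eq_zero_iff]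
    · rw [chromaticNumber_le_iff_colorable, colorable_cone_add_one_iff, Nat.cast_add_one,
        ENat.add_le_add_iff_right ENat.one_ne_top, chromaticNumber_le_iff_colorable]
  exact WithTop.eq_of_forall_le_coe_iff h

end SimpleGraph

section Cone

variable {V : Type*} (G : SimpleGraph V)

lemma completionEdges_cone (c : Option V → ℕ) :
    completionEdges G.cone c = Sym2.map some '' completionEdges G (c ∘ some) := by
  ext e
  constructor
  · rintro ⟨u, v, rfl, huv, hadj, hc⟩
    match u, v with
    | none, none => exact absurd rfl huv
    | none, some j => exact absurd (G.cone_adj_none_some j) hadj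
    | some i, none => exact absurd (G.cone_adj_some_none i) hadj
    | some i, some j => exact ⟨s(i, j), ⟨i, j, rfl, fun h => huv (h ▸ rfl), hadj, hc⟩, rfl⟩
  · rintro ⟨e', ⟨u, v, rfl, huv, hadj, hc⟩, rfl⟩
    exact ⟨some u, some v, rfl, (Option.some_injective _).ne huv, hadj, hc⟩

lemma ncard_completionEdges_cone (c : Option V → ℕ) :
    (completionEdges G.cone c).ncard = (completionEdges G (c ∘ some)).ncard := by
  rw [completionEdges_cone, Set.ncard_image_of_injective _
    (Sym2.map.injective (Option.some_injective _))]

lemma isChromaticColoring_cone_iff [Finite V] {c : Option V → ℕ} :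
    IsChromaticColoring G.cone c ↔
      IsChromaticColoring G (c ∘ some) ∧ c none ∉ Set.range (c ∘ some) := by
  have hproper : (∀ u v, G.cone.Adj u v → c u ≠ c v) ↔
      (∀ u v, G.Adj u v → c (some u) ≠ c (some v)) ∧ c none ∉ Set.range (c ∘ some) := by
    constructor
    · intro h
      exact ⟨fun u v huv => h _ _ (G.cone_adj_some_some.2 huv),
        fun ⟨i, hi⟩ => h _ _ (G.cone_adj_some_none i) hi⟩
    · rintro ⟨h, hnone⟩ (_ | i) (_ | j) hij
      · exact absurd hij G.cone.irrefl
      · exact fun e => hnone ⟨j, e.symm⟩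
      · exact fun e => hnone ⟨i, e⟩
      · exact h i j hij
  have hcount (hnone : c none ∉ Set.range (c ∘ some)) :
      ((Set.range c).ncard : ℕ∞) = (Set.range (c ∘ some)).ncard + 1 := by
    rw [Option.range_eq, Set.ncard_insert_of_notMem hnone, Nat.cast_add_one]
  rw [IsChromaticColoring, IsChromaticColoring, hproper, chromaticNumber_cone]
  constructor
  · rintro ⟨⟨h, hnone⟩, hcard⟩
    rw [hcount hnone] at hcard
    exact ⟨⟨h, WithTop.add_right_cancel ENat.one_ne_top hcard⟩, hnone⟩
  · rintro ⟨⟨h, hcard⟩, hnone⟩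
    exact ⟨⟨h, hnone⟩, by rw [hcount hnone, hcard]⟩

lemma zeta_cone [Finite V] : zeta G.cone = zeta G := by
  unfold zeta
  congr 1
  ext m
  constructor
  · rintro ⟨c, hc, rfl⟩
    exact ⟨c ∘ some, ((isChromaticColoring_cone_iff G).1 hc).1, ncard_completionEdges_cone G c⟩
  · rintro ⟨c, hc, rfl⟩
    obtain ⟨a, ha⟩ := (Set.finite_range c).exists_notMem
    exact ⟨fun o => o.elim a c, (isChromaticColoring_cone_iff G).2 ⟨hc, ha⟩,
      (ncard_completionEdges_cone G fun o => o.elim a c).symm⟩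

end Cone

lemma wheelGraph_eq_cone_cycleGraph (n : ℕ) : wheelGraph n = (cycleGraph n).cone := by
  ext (_ | i) (_ | j) <;> rfl

theorem zeta_wheel_eq_zeta_cycle_general (n : ℕ) :
    zeta (wheelGraph n) = zeta (cycleGraph n) := by
  rw [wheelGraph_eq_cone_cycleGraph, zeta_cone]

/-- For every $n ≥ 3$, $ζ(W_{1,n}) = ζ(C_n)$: the chromatic completion number of the
wheel equals that of its rim cycle. -/
theorem zeta_wheel_eq_zeta_cycle (n : ℕ) (hn : 3 ≤ n) :
    zeta (wheelGraph n) = zeta (cycleGraph n) :=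
  zeta_wheel_eq_zeta_cycle_general n
end

section
/- For every integer n ≥ 3, the sun graph S_n satisfies ζ(S_n) = n(n − 1)/2 + n(n − 3) = n(3n − 7)/2 (the count n(n−1)/2 coming from pairs of the n pairwise differently colored outer vertices, and n(n−3) from pairs of an outer vertex with the n − 3 clique vertices it is neither adjacent to nor shares a color with). -/
open SimpleGraph

/-- The sun graph `S_n`: the complete graph `K_n` on the `inl` vertices, together with
outer vertices `inr i` adjacent exactly to `inl i` and `inl (i+1)` (indices mod `n`). -/
def sunGraph (n : ℕ) : SimpleGraph (Fin n ⊕ Fin n) where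
  Adj u v := match u, v with
    | Sum.inl a, Sum.inl b => a ≠ b
    | Sum.inl a, Sum.inr i => (a : ℕ) = (i : ℕ) ∨ (a : ℕ) = ((i : ℕ) + 1) % n
    | Sum.inr i, Sum.inl b => (b : ℕ) = (i : ℕ) ∨ (b : ℕ) = ((i : ℕ) + 1) % n
    | Sum.inr _, Sum.inr _ => False
  symm := by
    constructor
    intro u v h
    cases u <;> cases v <;> simp_all
    exact fun hba => h hba.symm
  loopless := by
    constructor
    intro u h
    cases u with
    | inl a => exact h rfl
    | inr i => exact h

/-!
In a chromatic colouring of `S_n` the clique `v_1, …, v_n` receives all `n` colours, each once.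
Hence every outer vertex `u_i` repeats the colour of some `v_k` with `k ∉ {i, i + 1}`, so it forms
a completion pair with exactly `n - 3` clique vertices, whatever the colouring. The only freedom
lies among the pairwise non-adjacent outer vertices, which contribute at most `C(n, 2)` pairs;
this is attained by giving `u_i` the colour of `v_{i+2}`.
-/

theorem Set.ncard_setOf_prod {α β : Type*} [Fintype α] [Finite β] (P : α → β → Prop) :
    {p : α × β | P p.1 p.2}.ncard = ∑ a, {b | P a b}.ncard := by
  classical
  have : Fintype β := Fintype.ofFinite β
  simp only [Set.ncard_eq_toFinset_card', Set.toFinset_ofPred, Finset.card_filter,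
    Fintype.sum_prod_type]

theorem Nat.add_mod_eq_ite_of_lt {m k n : ℕ} (hm : m < n) (hk : k < n) :
    (m + k) % n = if n ≤ m + k then m + k - n else m + k := by
  rw [Nat.add_mod_eq_ite, Nat.mod_eq_of_lt hm, Nat.mod_eq_of_lt hk]

theorem IsChromaticColoring.exists_eq_of_pairwise_adj {V : Type*} [Finite V] {G : SimpleGraph V}
    {c : V → ℕ} (hc : IsChromaticColoring G c) {ι : Type*} (f : ι → V)
    (hf : Pairwise fun i j => G.Adj (f i) (f j)) (hcard : G.chromaticNumber ≤ Nat.card ι)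
    (v : V) : ∃ i, c v = c (f i) := by
  have hinj : Function.Injective (c ∘ f) := fun i j hij => by
    by_contra hne
    exact hc.1 _ _ (hf hne) hij
  have hle : (Set.range c).ncard ≤ (Set.range (c ∘ f)).ncard := by
    rw [Set.ncard_range_of_injective hinj]
    exact_mod_cast hc.2.trans_le hcard
  have hrange : Set.range (c ∘ f) = Set.range c :=
    Set.eq_of_subset_of_ncard_le (Set.range_comp_subset_range f c) hle
  obtain ⟨i, hi⟩ := hrange.ge (Set.mem_range_self v)
  exact ⟨i, hi.symm⟩

namespace SimpleGraph

variable {V W : Type*}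

def completionGraph (G : SimpleGraph V) (c : V → ℕ) : SimpleGraph V :=
  Gᶜ ⊓ (⊤ : SimpleGraph ℕ).comap c

theorem completionEdges_eq_edgeSet (G : SimpleGraph V) (c : V → ℕ) :
    completionEdges G c = (completionGraph G c).edgeSet := by
  ext e
  induction e using Sym2.ind with
  | _ u v =>
    simp only [completionEdges, Set.mem_ofPred_eq, mem_edgeSet, completionGraph, inf_adj,
      compl_adj, comap_adj, top_adj, Sym2.eq_iff]
    constructor
    · rintro ⟨a, b, ⟨rfl, rfl⟩ | ⟨rfl, rfl⟩, hne, hadj, hc⟩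
      · exact ⟨⟨hne, hadj⟩, hc⟩
      · exact ⟨⟨hne.symm, fun h => hadj h.symm⟩, Ne.symm hc⟩
    · rintro ⟨⟨hne, hadj⟩, hc⟩
      exact ⟨u, v, Or.inl ⟨rfl, rfl⟩, hne, hadj, hc⟩

theorem ncard_edgeSet_le_choose_two [Finite V] (G : SimpleGraph V) :
    G.edgeSet.ncard ≤ (Nat.card V).choose 2 := by
  rw [← Sym2.ncard_diagSet_compl, ← edgeSet_top]
  exact Set.ncard_le_ncard (edgeSet_mono le_top)

theorem ncard_edgeSet_top [Finite V] :
    (⊤ : SimpleGraph V).edgeSet.ncard = (Nat.card V).choose 2 := by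
  rw [edgeSet_top, Sym2.ncard_diagSet_compl]

theorem ncard_edgeSet_sum_of_not_adj_inl [Finite V] [Finite W] (H : SimpleGraph (V ⊕ W))
    (hV : ∀ a b, ¬ H.Adj (.inl a) (.inl b)) :
    H.edgeSet.ncard =
      (H.comap Sum.inr).edgeSet.ncard + {p : W × V | H.Adj (.inr p.1) (.inl p.2)}.ncard := by
  have hsplit : H.edgeSet = Sym2.map Sum.inr '' (H.comap Sum.inr).edgeSet ∪
      (fun p : W × V => s(.inr p.1, .inl p.2)) '' {p | H.Adj (.inr p.1) (.inl p.2)} := by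
    ext e
    induction e using Sym2.ind with
    | _ x y =>
      rcases x with a | w <;> rcases y with b | w'
      · simp [Sym2.forall, hV]
      · simp [Sym2.exists, Sym2.eq_swap, H.adj_comm]
      · simp [Sym2.exists]
      · rw [← Sym2.map_mk, Set.mem_union,
          (Sym2.map.injective Sum.inr_injective).mem_set_image]
        simp
  have hdisj : Disjoint (Sym2.map Sum.inr '' (H.comap Sum.inr).edgeSet)
      ((fun p : W × V => s(.inr p.1, .inl p.2)) '' {p | H.Adj (.inr p.1) (.inl p.2)}) := by
    simp [Set.disjoint_left, Sym2.forall]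
  have hinj : Function.Injective (fun p : W × V => (s(.inr p.1, .inl p.2) : Sym2 (V ⊕ W))) := by
    intro p q hpq
    simpa [Prod.ext_iff] using hpq
  rw [hsplit, Set.ncard_union_eq hdisj,
    Set.ncard_image_of_injective _ (Sym2.map.injective Sum.inr_injective),
    Set.ncard_image_of_injective _ hinj]

end SimpleGraph

section SunGraph

variable {n : ℕ}

@[simp]
theorem sunGraph_adj_inl_inl {a b : Fin n} : (sunGraph n).Adj (.inl a) (.inl b) ↔ a ≠ b :=
  Iff.rfl

@[simp]
theorem sunGraph_adj_inr_inl {i a : Fin n} :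
    (sunGraph n).Adj (.inr i) (.inl a) ↔ (a : ℕ) = i ∨ (a : ℕ) = (i + 1) % n :=
  Iff.rfl

@[simp]
theorem sunGraph_adj_inl_inr {a i : Fin n} :
    (sunGraph n).Adj (.inl a) (.inr i) ↔ (a : ℕ) = i ∨ (a : ℕ) = (i + 1) % n :=
  Iff.rfl

@[simp]
theorem sunGraph_not_adj_inr_inr {i j : Fin n} : ¬ (sunGraph n).Adj (.inr i) (.inr j) :=
  id

def sunColoring (n : ℕ) : Fin n ⊕ Fin n → ℕ
  | .inl a => a
  | .inr i => (i + 2) % n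

theorem sunColoring_adj_ne (hn : 3 ≤ n) {u v : Fin n ⊕ Fin n} (h : (sunGraph n).Adj u v) :
    sunColoring n u ≠ sunColoring n v := by
  rcases u with a | i <;> rcases v with b | j <;>
    simp only [sunGraph_adj_inl_inl, sunGraph_adj_inr_inl, sunGraph_adj_inl_inr,
      sunGraph_not_adj_inr_inr] at h <;>
    simp only [sunColoring, ne_eq]
  · exact Fin.val_injective.ne h
  all_goals
    rw [Nat.add_mod_eq_ite_of_lt (Fin.is_lt _) (by omega : 2 < n)] at *
    rw [Nat.add_mod_eq_ite_of_lt (Fin.is_lt _) (by omega : 1 < n)] at h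
    split_ifs at * <;> omega

theorem sunGraph_chromaticNumber (hn : 3 ≤ n) : (sunGraph n).chromaticNumber = n := by
  refine le_antisymm ?_ ?_
  · refine Colorable.chromaticNumber_le <| (colorable_iff_exists_bdd_nat_coloring n).2
      ⟨Coloring.mk (sunColoring n) (sunColoring_adj_ne hn), ?_⟩
    rintro (a | i)
    exacts [a.is_lt, Nat.mod_lt _ (by omega)]
  · exact le_chromaticNumber_of_pairwise_adj (by simp) Sum.inl fun a b h => h

theorem isChromaticColoring_sunColoring (hn : 3 ≤ n) :
    IsChromaticColoring (sunGraph n) (sunColoring n) := by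
  refine ⟨fun u v => sunColoring_adj_ne hn, ?_⟩
  have hrange : Set.range (sunColoring n) = Set.Iio n := by
    refine subset_antisymm ?_ fun m hm => ⟨.inl ⟨m, hm⟩, rfl⟩
    rintro _ ⟨a | i, rfl⟩
    exacts [a.is_lt, Nat.mod_lt _ (by omega)]
  rw [hrange, Set.ncard_Iio_nat, sunGraph_chromaticNumber hn]

section ChromaticColoring

variable {c : Fin n ⊕ Fin n → ℕ}

theorem IsChromaticColoring.inl_eq_inl_iff (hc : IsChromaticColoring (sunGraph n) c) {a b : Fin n} :
    c (.inl a) = c (.inl b) ↔ a = b :=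
  ⟨fun h => by_contra fun hab => hc.1 _ _ (sunGraph_adj_inl_inl.2 hab) h, fun h => h ▸ rfl⟩

theorem ncard_completionGraph_adj_inr_inl (hn : 3 ≤ n)
    (hc : IsChromaticColoring (sunGraph n) c) (i : Fin n) :
    {a | (completionGraph (sunGraph n) c).Adj (.inr i) (.inl a)}.ncard = n - 3 := by
  obtain ⟨k, hk⟩ := hc.exists_eq_of_pairwise_adj Sum.inl (fun a b h => h)
    (by rw [sunGraph_chromaticNumber hn, Nat.card_fin]) (.inr i)
  set i' : Fin n := ⟨(i + 1) % n, Nat.mod_lt _ (by omega)⟩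
  have hii' : i ≠ i' := by
    rw [Ne, Fin.ext_iff]
    change (i : ℕ) ≠ (i + 1) % n
    rw [Nat.add_mod_eq_ite_of_lt i.is_lt (by omega : 1 < n)]
    split_ifs <;> omega
  have hki : k ≠ i := fun h => hc.1 _ _ (sunGraph_adj_inr_inl.2 (.inl rfl)) (h ▸ hk)
  have hki' : k ≠ i' := fun h => hc.1 _ _ (sunGraph_adj_inr_inl.2 (.inr rfl)) (h ▸ hk)
  have hset : {a | (completionGraph (sunGraph n) c).Adj (.inr i) (.inl a)} = {i, i', k}ᶜ := by
    ext a
    simp only [completionGraph, inf_adj, compl_adj, comap_adj, top_adj, sunGraph_adj_inr_inl,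
      hk, ne_eq, hc.inl_eq_inl_iff, Set.mem_ofPred_eq, Set.mem_compl_iff, Set.mem_insert_iff,
      Set.mem_singleton_iff, Fin.ext_iff, i', reduceCtorEq, not_false_eq_true, true_and]
    rw [@eq_comm _ (k : ℕ)]
    tauto
  rw [hset, Set.ncard_compl, Nat.card_fin,
    Set.ncard_eq_three.2 ⟨i, i', k, hii', hki.symm, hki'.symm, rfl⟩]

theorem ncard_completionEdges_sunGraph (hn : 3 ≤ n) (hc : IsChromaticColoring (sunGraph n) c) :
    (completionEdges (sunGraph n) c).ncard =
      ((completionGraph (sunGraph n) c).comap Sum.inr).edgeSet.ncard + n * (n - 3) := by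
  have hinl : ∀ a b, ¬ (completionGraph (sunGraph n) c).Adj (.inl a) (.inl b) :=
    fun a b h => h.1.2 fun hab => h.1.1 (congrArg Sum.inl hab)
  rw [completionEdges_eq_edgeSet, ncard_edgeSet_sum_of_not_adj_inl _ hinl,
    Set.ncard_setOf_prod fun w a => (completionGraph (sunGraph n) c).Adj (.inr w) (.inl a)]
  simp [ncard_completionGraph_adj_inr_inl hn hc]

end ChromaticColoring

theorem comap_inr_completionGraph_sunColoring (hn : 3 ≤ n) :
    (completionGraph (sunGraph n) (sunColoring n)).comap Sum.inr = ⊤ := by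
  ext i j
  simp only [completionGraph, comap_adj, inf_adj, compl_adj, top_adj, ne_eq,
    Sum.inr.injEq, sunGraph_not_adj_inr_inr, not_false_eq_true, and_true, sunColoring,
    Fin.ext_iff]
  rw [Nat.add_mod_eq_ite_of_lt i.is_lt (by omega : 2 < n),
    Nat.add_mod_eq_ite_of_lt j.is_lt (by omega : 2 < n)]
  split_ifs <;> omega

theorem zeta_sunGraph (hn : 3 ≤ n) : zeta (sunGraph n) = n.choose 2 + n * (n - 3) := by
  refine IsGreatest.csSup_eq ⟨⟨sunColoring n, isChromaticColoring_sunColoring hn, ?_⟩, ?_⟩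
  · rw [ncard_completionEdges_sunGraph hn (isChromaticColoring_sunColoring hn),
      comap_inr_completionGraph_sunColoring hn, ncard_edgeSet_top, Nat.card_fin]
  · rintro _ ⟨c, hc, rfl⟩
    rw [ncard_completionEdges_sunGraph hn hc]
    gcongr
    simpa using ncard_edgeSet_le_choose_two ((completionGraph (sunGraph n) c).comap Sum.inr)

end SunGraph

/-- For every $n ≥ 3$, $ζ(S_n) = n(n-1)/2 + n(n-3) = n(3n-7)/2$. -/
theorem zeta_sun (n : ℕ) (hn : 3 ≤ n) :
    zeta (sunGraph n) = n * (n - 1) / 2 + n * (n - 3) ∧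
    zeta (sunGraph n) = n * (3 * n - 7) / 2 := by
  rw [zeta_sunGraph hn, Nat.choose_two_right]
  refine ⟨rfl, ?_⟩
  rw [show n * (3 * n - 7) = n * (n - 1) + n * (n - 3) * 2 by
      rw [show 3 * n - 7 = n - 1 + (n - 3) * 2 by omega]; ring,
    Nat.add_mul_div_right _ _ two_pos]
end
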